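/- Fix M ≥ 2, n ∈ {1,…,M} and η_Y > 0. Define the discrete dynamics w(0) = 0 ∈ ℝ^M and w(s) = w(s−1) + η_Y (e_n − α(s)) for s ≥ 1, where α(s) := exp(w(s−1))/(1ᵀexp(w(s−1))) is the softmax of w(s−1). Define h*(0) = 0 and h*(s) = h*(s−1) + η_Y/((M−1) + exp(M·h*(s−1))) for s ≥ 1. Then for every s ≥ 1: (i) w(s) = (M−1)·h*(s)·ζ_n; (ii) α_j(s) = exp(M·h*(s−1))/((M−1)+exp(M·h*(s−1))) if j = n and α_j(s) = 1/((M−1)+exp(M·h*(s−1))) if j ≠ n; (iii) e_n − α(s) = ((M−1)/((M−1)+exp(M·h*(s−1))))·ζ_n. -/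

import Mathlib

open Real Finset

/-! Write `ζ = M e_n - 1`, so that `(M - 1) ζ_n = ζ`. If `w(s-1) = h ζ`, then, softmax being
invariant under adding a constant vector, `α(s)` is the softmax of `M h e_n`, whose entries are
`exp (M h) / D` and `1 / D` with `D = (M - 1) + exp (M h)`; hence `e_n - α(s) = ζ / D` and
`w(s) = (h + η_Y / D) ζ`. By induction `w(s) = h*(s) ζ` for all `s`, and (i)–(iii) follow. -/

section
variable {ι : Type*} [Fintype ι]

noncomputable def softmax (v : ι → ℝ) (j : ι) : ℝ :=
  exp (v j) / ∑ k, exp (v k)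

theorem softmax_add_const (v : ι → ℝ) (c : ℝ) : softmax (fun k => v k + c) = softmax v := by
  funext j
  simp only [softmax, exp_add, ← sum_mul]
  exact mul_div_mul_right _ _ (exp_ne_zero c)

variable [DecidableEq ι]

theorem sum_exp_ite_eq (n : ι) (a : ℝ) :
    ∑ k, exp (if k = n then a else 0) = (Fintype.card ι - 1 : ℝ) + exp a := by
  have : 0 < Fintype.card ι := Fintype.card_pos_iff.2 ⟨n⟩
  rw [Fintype.sum_eq_add_sum_compl n, if_pos rfl, add_comm, sum_congr rfl fun k hk => by
    rw [if_neg (mem_compl.1 hk ∘ mem_singleton.2), exp_zero]]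
  simp [card_compl, Nat.cast_pred this]

theorem softmax_spike (n : ι) (h : ℝ) (j : ι) :
    softmax (fun k => h * (Fintype.card ι * (if k = n then 1 else 0) - 1)) j =
      (if j = n then exp (Fintype.card ι * h) else 1) /
        ((Fintype.card ι - 1 : ℝ) + exp (Fintype.card ι * h)) := by
  have shift (k : ι) : h * (Fintype.card ι * (if k = n then 1 else 0) - 1) =
      (if k = n then Fintype.card ι * h else 0) + -h := by
    split_ifs <;> ring
  simp only [shift, softmax_add_const (fun k => if k = n then (Fintype.card ι : ℝ) * h else 0)]
  rw [softmax, sum_exp_ite_eq, apply_ite exp, exp_zero]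

end

theorem ite_sub_ite_div_eq (p : Prop) [Decidable p] {m x : ℝ} (hx : m - 1 + x ≠ 0) :
    (if p then 1 else 0) - (if p then x else 1) / (m - 1 + x) =
      (m * (if p then 1 else 0) - 1) / (m - 1 + x) := by
  split_ifs <;> field_simp <;> ring

theorem stmt_4_general (M : ℕ) (hM : 2 ≤ M) (n : Fin M) (ηY : ℝ)
    (w : ℕ → Fin M → ℝ) (α : ℕ → Fin M → ℝ) (hstar : ℕ → ℝ)
    -- `α(s)` is the softmax of `w(s−1)`
    (hα : ∀ s : ℕ, 1 ≤ s → ∀ j : Fin M,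
      α s j = Real.exp (w (s - 1) j) / ∑ k : Fin M, Real.exp (w (s - 1) k))
    -- dynamics of `w`
    (hw0 : ∀ j : Fin M, w 0 j = 0)
    (hwrec : ∀ s : ℕ, 1 ≤ s → ∀ j : Fin M,
      w s j = w (s - 1) j + ηY * ((if j = n then (1 : ℝ) else 0) - α s j))
    -- recursion defining `h*`
    (hh0 : hstar 0 = 0)
    (hhrec : ∀ s : ℕ, 1 ≤ s →
      hstar s = hstar (s - 1) + ηY / (((M : ℝ) - 1) + Real.exp (M * hstar (s - 1)))) :
    ∀ s : ℕ, 1 ≤ s →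
      -- (i)  w(s) = (M−1)·h*(s)·ζ_n
      (∀ j : Fin M, w s j =
        ((M : ℝ) - 1) * hstar s *
          ((M : ℝ) / ((M : ℝ) - 1) * ((if j = n then (1 : ℝ) else 0) - 1 / (M : ℝ)))) ∧
      -- (ii) explicit form of α(s)
      (∀ j : Fin M, α s j =
        if j = n then
          Real.exp (M * hstar (s - 1)) / (((M : ℝ) - 1) + Real.exp (M * hstar (s - 1)))
        else 1 / (((M : ℝ) - 1) + Real.exp (M * hstar (s - 1)))) ∧
      -- (iii) e_n − α(s) = ((M−1)/((M−1)+exp(M·h*(s−1))))·ζ_n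
      (∀ j : Fin M, (if j = n then (1 : ℝ) else 0) - α s j =
        (((M : ℝ) - 1) / (((M : ℝ) - 1) + Real.exp (M * hstar (s - 1)))) *
          ((M : ℝ) / ((M : ℝ) - 1) * ((if j = n then (1 : ℝ) else 0) - 1 / (M : ℝ)))) := by
  have hM1 : (0 : ℝ) < M - 1 := by
    have : (2 : ℝ) ≤ M := by exact_mod_cast hM
    linarith
  have hD (x : ℝ) : (M : ℝ) - 1 + exp x ≠ 0 := (add_pos hM1 (exp_pos x)).ne'
  have hα_spike (s : ℕ) (hs : 1 ≤ s)
      (hw : ∀ j, w (s - 1) j = hstar (s - 1) * (M * (if j = n then 1 else 0) - 1)) (j : Fin M) :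
      α s j = (if j = n then exp (M * hstar (s - 1)) else 1) /
        ((M : ℝ) - 1 + exp (M * hstar (s - 1))) := by
    rw [hα s hs j]
    change softmax (w (s - 1)) j = _
    simpa [funext hw] using softmax_spike n (hstar (s - 1)) j
  have hw (s : ℕ) (j : Fin M) : w s j = hstar s * (M * (if j = n then 1 else 0) - 1) := by
    induction s generalizing j with
    | zero => simp [hw0, hh0]
    | succ s ih =>
      have hαs := hα_spike (s + 1) (by omega) (by simpa using ih)
      simp only [Nat.add_sub_cancel] at hαs
      rw [hwrec _ (by omega), hhrec _ (by omega), Nat.add_sub_cancel, ih, hαs,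
        ite_sub_ite_div_eq _ (hD _)]
      field_simp
  intro s hs
  have hαs := hα_spike s hs (hw (s - 1))
  refine ⟨fun j => ?_, fun j => ?_, fun j => ?_⟩
  · rw [hw]
    field_simp
  · rw [hαs]
    split_ifs <;> rfl
  · rw [hαs, ite_sub_ite_div_eq _ (hD _)]
    field_simp

/-- The discrete decoder dynamics `w(0) = 0`,
`w(s) = w(s−1) + η_Y (e_n − α(s))` with `α(s) = softmax (w (s−1))` admits the closed form
`w(s) = (M−1)·h*(s)·ζ_n`, where `h*` is the recursion
`h*(s) = h*(s−1) + η_Y/((M−1) + exp (M·h*(s−1)))`, `h*(0) = 0`, together with the explicit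
expressions for `α(s)` and `e_n − α(s)`. -/
theorem stmt_4 (M : ℕ) (hM : 2 ≤ M) (n : Fin M) (ηY : ℝ) (hη : 0 < ηY)
    (w : ℕ → Fin M → ℝ) (α : ℕ → Fin M → ℝ) (hstar : ℕ → ℝ)
    -- `α(s)` is the softmax of `w(s−1)`
    (hα : ∀ s : ℕ, 1 ≤ s → ∀ j : Fin M,
      α s j = Real.exp (w (s - 1) j) / ∑ k : Fin M, Real.exp (w (s - 1) k))
    -- dynamics of `w`
    (hw0 : ∀ j : Fin M, w 0 j = 0)
    (hwrec : ∀ s : ℕ, 1 ≤ s → ∀ j : Fin M,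
      w s j = w (s - 1) j + ηY * ((if j = n then (1 : ℝ) else 0) - α s j))
    -- recursion defining `h*`
    (hh0 : hstar 0 = 0)
    (hhrec : ∀ s : ℕ, 1 ≤ s →
      hstar s = hstar (s - 1) + ηY / (((M : ℝ) - 1) + Real.exp (M * hstar (s - 1)))) :
    ∀ s : ℕ, 1 ≤ s →
      -- (i)  w(s) = (M−1)·h*(s)·ζ_n
      (∀ j : Fin M, w s j =
        ((M : ℝ) - 1) * hstar s *
          ((M : ℝ) / ((M : ℝ) - 1) * ((if j = n then (1 : ℝ) else 0) - 1 / (M : ℝ)))) ∧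
      -- (ii) explicit form of α(s)
      (∀ j : Fin M, α s j =
        if j = n then
          Real.exp (M * hstar (s - 1)) / (((M : ℝ) - 1) + Real.exp (M * hstar (s - 1)))
        else 1 / (((M : ℝ) - 1) + Real.exp (M * hstar (s - 1)))) ∧
      -- (iii) e_n − α(s) = ((M−1)/((M−1)+exp(M·h*(s−1))))·ζ_n
      (∀ j : Fin M, (if j = n then (1 : ℝ) else 0) - α s j =
        (((M : ℝ) - 1) / (((M : ℝ) - 1) + Real.exp (M * hstar (s - 1)))) *
          ((M : ℝ) / ((M : ℝ) - 1) * ((if j = n then (1 : ℝ) else 0) - 1 / (M : ℝ)))) :=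
  stmt_4_general M hM n ηY w α hstar hα hw0 hwrec hh0 hhrec
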